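/- Let B be a symmetric n×n real matrix in the interior of the copositive cone. Then the set Min_COP(B) = { v ∈ ℤ^n_{≥0} : v^T B v = min_COP(B) } of nonzero nonnegative integer vectors attaining the copositive minimum is finite. -/
import Mathlib


open Matrix

/-- The quadratic form `B[x] = xᵀ B x`. -/
def quadForm {n : ℕ} (B : Matrix (Fin n) (Fin n) ℝ) (x : Fin n → ℝ) : ℝ :=
  x ⬝ᵥ B.mulVec x

/-- The copositive minimum: infimum of `B[v]` over nonzero nonnegative integer vectors. -/
noncomputable def copositiveMin {n : ℕ} (B : Matrix (Fin n) (Fin n) ℝ) : ℝ :=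
  sInf {t : ℝ | ∃ v : Fin n → ℤ, (∀ i, 0 ≤ v i) ∧ v ≠ 0 ∧
    t = quadForm B (fun i => (v i : ℝ))}

lemma quadForm_smul {n : ℕ} (B : Matrix (Fin n) (Fin n) ℝ) (t : ℝ) (x : Fin n → ℝ) :
    quadForm B (t • x) = t ^ 2 * quadForm B x := by
  simp [quadForm, Matrix.mulVec_smul, smul_dotProduct, dotProduct_smul,
    smul_eq_mul]
  ring

lemma quadForm_continuous {n : ℕ} (B : Matrix (Fin n) (Fin n) ℝ) :
    Continuous (quadForm B) := by
  have h : quadForm B = fun x => ∑ i, x i * ∑ j, B i j * x j := by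
    funext x
    simp [quadForm, Matrix.mulVec, dotProduct]
  rw [h]
  continuity

theorem minCop_attained_finitely {n : ℕ}
    (B : Matrix (Fin n) (Fin n) ℝ) (hB : B.IsSymm)
    (hint : ∀ x : Fin n → ℝ, (∀ i, 0 ≤ x i) → x ≠ 0 → 0 < quadForm B x) :
    {v : Fin n → ℤ | (∀ i, 0 ≤ v i) ∧ v ≠ 0 ∧
      quadForm B (fun i => (v i : ℝ)) = copositiveMin B}.Finite := by
  rcases Nat.eq_zero_or_pos n with hn | hn
  · subst hn
    exact Set.toFinite _
  haveI : Nonempty (Fin n) := ⟨⟨0, hn⟩⟩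
  -- the compact set of nonnegative unit vectors
  set K : Set (Fin n → ℝ) := {x | (∀ i, 0 ≤ x i) ∧ ‖x‖ = 1} with hKdef
  have hKc : IsCompact K := by
    apply Metric.isCompact_of_isClosed_isBounded
    · have h1 : IsClosed {x : Fin n → ℝ | ∀ i, 0 ≤ x i} := by
        have : {x : Fin n → ℝ | ∀ i, 0 ≤ x i} = ⋂ i, {x | 0 ≤ x i} := by
          ext x; simp
        rw [this]
        exact isClosed_iInter fun i =>
          isClosed_le continuous_const (continuous_apply i)
      have h2 : IsClosed {x : Fin n → ℝ | ‖x‖ = 1} :=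
        isClosed_eq continuous_norm continuous_const
      exact h1.inter h2
    · apply (Metric.isBounded_closedBall (x := (0 : Fin n → ℝ)) (r := 1)).subset
      intro x hx
      rw [Metric.mem_closedBall, dist_zero_right]
      exact le_of_eq hx.2
  have hKne : K.Nonempty := by
    refine ⟨fun _ => (1 : ℝ), fun i => zero_le_one, ?_⟩
    simp [pi_norm_const]
  obtain ⟨z, hzK, hz⟩ := hKc.exists_isMinOn hKne (quadForm_continuous B).continuousOn
  set c : ℝ := quadForm B z with hcdef
  have hz0 : z ≠ 0 := by
    intro h
    have h2 : ‖z‖ = 1 := hzK.2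
    rw [h, norm_zero] at h2
    exact zero_ne_one h2
  have hc : 0 < c := hint z hzK.1 hz0
  -- key estimate
  have key : ∀ x : Fin n → ℝ, (∀ i, 0 ≤ x i) → c * ‖x‖ ^ 2 ≤ quadForm B x := by
    intro x hx
    rcases eq_or_ne x 0 with rfl | hx0
    · simp [quadForm]
    · have hr : 0 < ‖x‖ := norm_pos_iff.mpr hx0
      have hyK : (‖x‖⁻¹ • x) ∈ K := by
        constructor
        · intro i
          have : (‖x‖⁻¹ • x) i = ‖x‖⁻¹ * x i := rfl
          rw [this]
          exact mul_nonneg (inv_nonneg.mpr hr.le) (hx i)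
        · rw [norm_smul, norm_inv, norm_norm, inv_mul_cancel₀ hr.ne']
      have hcy : c ≤ quadForm B (‖x‖⁻¹ • x) := hz hyK
      rw [quadForm_smul] at hcy
      have h1 := mul_le_mul_of_nonneg_right hcy (sq_nonneg ‖x‖)
      have h2 : ‖x‖⁻¹ ^ 2 * quadForm B x * ‖x‖ ^ 2 = quadForm B x := by
        field_simp
      linarith
  set m : ℝ := copositiveMin B with hm
  set M : ℤ := ⌈m / c⌉ with hM
  have hk2 : ∀ k : ℤ, 0 ≤ k → k ≤ k ^ 2 := by
    intro k hk
    rcases hk.eq_or_lt with h | h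
    · simp [← h]
    · nlinarith
  apply Set.Finite.subset (Set.Finite.pi fun _ : Fin n => Set.finite_Icc (0 : ℤ) M)
  rintro v ⟨hv0, hvne, hvm⟩
  rw [Set.mem_pi]
  intro i _
  set x : Fin n → ℝ := fun j => (v j : ℝ) with hx
  have hxn : ∀ j, 0 ≤ x j := by
    intro j
    simp only [hx]
    exact_mod_cast hv0 j
  have hkey := key x hxn
  rw [hvm] at hkey
  -- ‖x‖² ≤ m / c
  have hnorm : ‖x‖ ^ 2 ≤ m / c := by
    rw [le_div_iff₀ hc]
    linarith
  have hxi : |x i| ≤ ‖x‖ := norm_le_pi_norm x i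
  have hxi2 : (v i : ℝ) ^ 2 ≤ m / c := by
    have : (v i : ℝ) ^ 2 = |x i| ^ 2 := by rw [sq_abs]
    calc (v i : ℝ) ^ 2 = |x i| ^ 2 := this
      _ ≤ ‖x‖ ^ 2 := by nlinarith [abs_nonneg (x i), norm_nonneg x]
      _ ≤ m / c := hnorm
  have hsqM : (v i) ^ 2 ≤ M := by
    have h1 : ((v i) ^ 2 : ℝ) ≤ (M : ℝ) := by
      calc ((v i : ℝ)) ^ 2 ≤ m / c := hxi2
        _ ≤ (⌈m / c⌉ : ℝ) := Int.le_ceil _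
    exact_mod_cast h1
  have : v i ≤ M := le_trans (hk2 (v i) (hv0 i)) hsqM
  exact Set.mem_Icc.mpr ⟨hv0 i, this⟩
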